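/- arXiv:1406.7040 — 3 statements merged into one kernel-verified Lean document; each statement's English description precedes it below -/
import Mathlib

section
/- For bounded real random variables X, Y on the same probability space and α ∈ (0,1), EVaR is convex: EVaR_α(λX + (1-λ)Y) ≤ λ·EVaR_α(X) + (1-λ)·EVaR_α(Y) for all λ ∈ [0,1]. -/
open MeasureTheory Real

noncomputable def EVaR {Ω : Type*} [MeasurableSpace Ω] (μ : Measure Ω) (X : Ω → ℝ)
    (α : ℝ) : ℝ :=
  sInf ((fun s : ℝ => (Real.log (∫ ω, Real.exp (-s * X ω) ∂μ) - Real.log α) / s) '' Set.Ioi 0)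

/-!
Write `EVaR_α(X) = inf_{s > 0} (K_X(s) - log α) / s` with `K_X(s) = log E[exp(-s X)]`.
By Hölder's inequality `log E[exp(·)]` is convex, which makes the objective jointly convex in
`(1/s, X)` (it is a perspective function). Concretely, given `t₁, t₂ > 0` put
`1/t = λ/t₁ + (1-λ)/t₂` and `θ = λ t / t₁`; then `-t Z = θ (-t₁ X) + (1-θ) (-t₂ Y)` for
`Z = λ X + (1-λ) Y`, so `K_Z(t) ≤ θ K_X(t₁) + (1-θ) K_Y(t₂)`, and dividing by `t` bounds the
objective of `Z` at `t` by `λ` times that of `X` at `t₁` plus `1-λ` times that of `Y` at `t₂`.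
Taking infima over `t₁` and `t₂` gives convexity.
-/

theorem abs_convexComb_le {a b A B lam : ℝ} (ha : |a| ≤ A) (hb : |b| ≤ B) (h₀ : 0 ≤ lam)
    (h₁ : lam ≤ 1) : |lam * a + (1 - lam) * b| ≤ lam * A + (1 - lam) * B :=
  calc |lam * a + (1 - lam) * b| ≤ |lam * a| + |(1 - lam) * b| := abs_add_le _ _
    _ ≤ lam * A + (1 - lam) * B := by
      rw [abs_mul, abs_mul, abs_of_nonneg h₀, abs_of_nonneg (sub_nonneg.2 h₁)]
      gcongr

theorem exists_perspective_weights {lam t₁ t₂ : ℝ} (h₀ : 0 ≤ lam) (h₁ : lam ≤ 1) (ht₁ : 0 < t₁)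
    (ht₂ : 0 < t₂) : ∃ t θ : ℝ, 0 < t ∧ 0 ≤ θ ∧ θ ≤ 1 ∧
      t * lam = θ * t₁ ∧ t * (1 - lam) = (1 - θ) * t₂ := by
  have h₁' : 0 ≤ 1 - lam := sub_nonneg.2 h₁
  have hD : 0 < lam * t₂ + (1 - lam) * t₁ := by
    rcases h₀.eq_or_lt with rfl | hlam
    · simpa using ht₁
    · exact add_pos_of_pos_of_nonneg (mul_pos hlam ht₂) (mul_nonneg h₁' ht₁.le)
  refine ⟨t₁ * t₂ / (lam * t₂ + (1 - lam) * t₁), lam * t₂ / (lam * t₂ + (1 - lam) * t₁),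
    by positivity, by positivity, ?_, ?_, ?_⟩
  · rw [div_le_one hD]
    nlinarith [mul_nonneg h₁' ht₁.le]
  · field_simp
  · rw [one_sub_div hD.ne']
    field_simp
    ring

theorem le_convexComb_sInf {S T : Set ℝ} (hS : S.Nonempty) (hT : T.Nonempty) {lam a : ℝ}
    (h₀ : 0 ≤ lam) (h₁ : lam ≤ 1) (h : ∀ x ∈ S, ∀ y ∈ T, a ≤ lam * x + (1 - lam) * y) :
    a ≤ lam * sInf S + (1 - lam) * sInf T := by
  refine le_of_forall_pos_le_add fun ε hε => ?_
  obtain ⟨x, hxS, hx⟩ := Real.lt_sInf_add_pos hS hε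
  obtain ⟨y, hyT, hy⟩ := Real.lt_sInf_add_pos hT hε
  calc a ≤ lam * x + (1 - lam) * y := h x hxS y hyT
    _ ≤ lam * (sInf S + ε) + (1 - lam) * (sInf T + ε) := by gcongr
    _ = lam * sInf S + (1 - lam) * sInf T + ε := by ring

section

variable {Ω : Type*} [MeasurableSpace Ω] {μ : Measure Ω}

theorem integrable_exp_convexComb {f g : Ω → ℝ} (hf : Integrable (fun ω => exp (f ω)) μ)
    (hg : Integrable (fun ω => exp (g ω)) μ) {θ : ℝ} (hθ₀ : 0 ≤ θ) (hθ₁ : θ ≤ 1) :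
    Integrable (fun ω => exp (θ * f ω + (1 - θ) * g ω)) μ := by
  have hfm : AEMeasurable f μ := by simpa using hf.aemeasurable.log
  have hgm : AEMeasurable g μ := by simpa using hg.aemeasurable.log
  refine ((hf.const_mul θ).add (hg.const_mul (1 - θ))).mono'
    ((hfm.const_mul θ).add (hgm.const_mul (1 - θ))).exp.aestronglyMeasurable
    (Filter.Eventually.of_forall fun ω => ?_)
  rw [norm_of_nonneg (exp_pos _).le]
  exact convexOn_exp.2 (Set.mem_univ _) (Set.mem_univ _) hθ₀ (sub_nonneg.2 hθ₁) (by ring)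

theorem integral_exp_convexComb_le {f g : Ω → ℝ} (hf : Integrable (fun ω => exp (f ω)) μ)
    (hg : Integrable (fun ω => exp (g ω)) μ) {θ : ℝ} (hθ₀ : 0 ≤ θ) (hθ₁ : θ ≤ 1) :
    ∫ ω, exp (θ * f ω + (1 - θ) * g ω) ∂μ ≤
      (∫ ω, exp (f ω) ∂μ) ^ θ * (∫ ω, exp (g ω) ∂μ) ^ (1 - θ) := by
  have hθ₁' : 0 ≤ 1 - θ := sub_nonneg.2 hθ₁
  have hpow (ω : Ω) : ENNReal.ofReal (exp (θ * f ω + (1 - θ) * g ω)) =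
      ENNReal.ofReal (exp (f ω)) ^ θ * ENNReal.ofReal (exp (g ω)) ^ (1 - θ) := by
    rw [ENNReal.ofReal_rpow_of_nonneg (exp_pos _).le hθ₀,
      ENNReal.ofReal_rpow_of_nonneg (exp_pos _).le hθ₁', ← ENNReal.ofReal_mul (by positivity),
      ← exp_mul, ← exp_mul, ← exp_add, mul_comm (f ω), mul_comm (g ω)]
  -- The `ℝ≥0∞`-valued Hölder inequality needs no integrability and allows `θ ∈ {0, 1}`.
  have hholder := ENNReal.lintegral_mul_norm_pow_le hf.aemeasurable.ennreal_ofReal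
    hg.aemeasurable.ennreal_ofReal hθ₀ hθ₁' (add_sub_cancel θ 1)
  simp only [← hpow] at hholder
  have hpos (h : Ω → ℝ) : 0 ≤ᵐ[μ] fun ω => exp (h ω) :=
    Filter.Eventually.of_forall fun ω => (exp_pos _).le
  rw [integral_eq_lintegral_of_nonneg_ae (hpos _)
      (integrable_exp_convexComb hf hg hθ₀ hθ₁).aestronglyMeasurable,
    integral_eq_lintegral_of_nonneg_ae (hpos _) hf.aestronglyMeasurable,
    integral_eq_lintegral_of_nonneg_ae (hpos _) hg.aestronglyMeasurable,
    ENNReal.toReal_rpow, ENNReal.toReal_rpow, ← ENNReal.toReal_mul]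
  exact ENNReal.toReal_mono (ENNReal.mul_ne_top
    (ENNReal.rpow_ne_top_of_nonneg hθ₀ hf.lintegral_lt_top.ne)
    (ENNReal.rpow_ne_top_of_nonneg hθ₁' hg.lintegral_lt_top.ne)) hholder

theorem log_integral_exp_convexComb_le [NeZero μ] {f g : Ω → ℝ}
    (hf : Integrable (fun ω => exp (f ω)) μ) (hg : Integrable (fun ω => exp (g ω)) μ)
    {θ : ℝ} (hθ₀ : 0 ≤ θ) (hθ₁ : θ ≤ 1) :
    log (∫ ω, exp (θ * f ω + (1 - θ) * g ω) ∂μ) ≤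
      θ * log (∫ ω, exp (f ω) ∂μ) + (1 - θ) * log (∫ ω, exp (g ω) ∂μ) := by
  have hF := integral_exp_pos hf
  have hG := integral_exp_pos hg
  calc _ ≤ log ((∫ ω, exp (f ω) ∂μ) ^ θ * (∫ ω, exp (g ω) ∂μ) ^ (1 - θ)) :=
        log_le_log (integral_exp_pos (integrable_exp_convexComb hf hg hθ₀ hθ₁))
          (integral_exp_convexComb_le hf hg hθ₀ hθ₁)
    _ = _ := by
        rw [log_mul (rpow_pos_of_pos hF θ).ne' (rpow_pos_of_pos hG _).ne', log_rpow hF, log_rpow hG]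

noncomputable def evarObjective (μ : Measure Ω) (X : Ω → ℝ) (α s : ℝ) : ℝ :=
  (log (∫ ω, exp (-s * X ω) ∂μ) - log α) / s

theorem evar_eq_sInf (μ : Measure Ω) (X : Ω → ℝ) (α : ℝ) :
    EVaR μ X α = sInf (evarObjective μ X α '' Set.Ioi 0) := rfl

theorem integrable_exp_mul_of_abs_le [IsFiniteMeasure μ] {X : Ω → ℝ} {C : ℝ}
    (hX : AEMeasurable X μ) (hXC : ∀ ω, |X ω| ≤ C) (s : ℝ) :
    Integrable (fun ω => exp (s * X ω)) μ := by
  refine Integrable.of_bound (hX.const_mul s).exp.aestronglyMeasurable (exp (|s| * C))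
    (Filter.Eventually.of_forall fun ω => ?_)
  rw [norm_of_nonneg (exp_pos _).le, exp_le_exp]
  calc s * X ω ≤ |s * X ω| := le_abs_self _
    _ ≤ |s| * C := by rw [abs_mul]; gcongr; exact hXC ω

variable [IsProbabilityMeasure μ]

theorem neg_le_evarObjective {X : Ω → ℝ} {C α s : ℝ} (hX : AEMeasurable X μ)
    (hXC : ∀ ω, |X ω| ≤ C) (hα₀ : 0 ≤ α) (hα₁ : α ≤ 1) (hs : 0 < s) :
    -C ≤ evarObjective μ X α s := by
  have hexp : exp (-s * C) ≤ ∫ ω, exp (-s * X ω) ∂μ := by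
    simpa using integral_mono (integrable_const _) (integrable_exp_mul_of_abs_le hX hXC (-s))
      fun ω => exp_le_exp.2 <| by nlinarith [(abs_le.1 (hXC ω)).2]
  have hlog : -s * C ≤ log (∫ ω, exp (-s * X ω) ∂μ) :=
    (le_log_iff_exp_le (lt_of_lt_of_le (exp_pos _) hexp)).2 hexp
  rw [evarObjective, le_div_iff₀ hs]
  nlinarith [log_nonpos hα₀ hα₁]

theorem evar_le_evarObjective {X : Ω → ℝ} {C α s : ℝ} (hX : AEMeasurable X μ)
    (hXC : ∀ ω, |X ω| ≤ C) (hα₀ : 0 ≤ α) (hα₁ : α ≤ 1) (hs : 0 < s) :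
    EVaR μ X α ≤ evarObjective μ X α s :=
  csInf_le ⟨-C, Set.forall_mem_image.2 fun _ ht => neg_le_evarObjective hX hXC hα₀ hα₁ ht⟩
    ⟨s, hs, rfl⟩

theorem evar_convexComb_le {X Y : Ω → ℝ} {CX CY α lam t₁ t₂ : ℝ} (hX : AEMeasurable X μ)
    (hY : AEMeasurable Y μ) (hXC : ∀ ω, |X ω| ≤ CX) (hYC : ∀ ω, |Y ω| ≤ CY)
    (hα₀ : 0 ≤ α) (hα₁ : α ≤ 1) (hlam₀ : 0 ≤ lam) (hlam₁ : lam ≤ 1) (ht₁ : 0 < t₁)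
    (ht₂ : 0 < t₂) :
    EVaR μ (fun ω => lam * X ω + (1 - lam) * Y ω) α ≤
      lam * evarObjective μ X α t₁ + (1 - lam) * evarObjective μ Y α t₂ := by
  obtain ⟨t, θ, ht, hθ₀, hθ₁, hX_weight, hY_weight⟩ :=
    exists_perspective_weights hlam₀ hlam₁ ht₁ ht₂
  have hZ (ω : Ω) : -t * (lam * X ω + (1 - lam) * Y ω) =
      θ * (-t₁ * X ω) + (1 - θ) * (-t₂ * Y ω) := by
    linear_combination -X ω * hX_weight - Y ω * hY_weight
  set LX := log (∫ ω, exp (-t₁ * X ω) ∂μ)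
  set LY := log (∫ ω, exp (-t₂ * Y ω) ∂μ)
  calc EVaR μ (fun ω => lam * X ω + (1 - lam) * Y ω) α
      ≤ evarObjective μ (fun ω => lam * X ω + (1 - lam) * Y ω) α t :=
        evar_le_evarObjective ((hX.const_mul lam).add (hY.const_mul (1 - lam)))
          (fun ω => abs_convexComb_le (hXC ω) (hYC ω) hlam₀ hlam₁) hα₀ hα₁ ht
    _ = (log (∫ ω, exp (θ * (-t₁ * X ω) + (1 - θ) * (-t₂ * Y ω)) ∂μ) - log α) / t := by
        simp only [evarObjective, hZ]
    _ ≤ (θ * LX + (1 - θ) * LY - log α) / t := by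
        gcongr
        exact log_integral_exp_convexComb_le (integrable_exp_mul_of_abs_le hX hXC _)
          (integrable_exp_mul_of_abs_le hY hYC _) hθ₀ hθ₁
    _ = lam * evarObjective μ X α t₁ + (1 - lam) * evarObjective μ Y α t₂ := by
        change _ = lam * ((LX - log α) / t₁) + (1 - lam) * ((LY - log α) / t₂)
        field_simp
        linear_combination -(t₂ * (LX - log α)) * hX_weight - t₁ * (LY - log α) * hY_weight

end

theorem evar_convex {Ω : Type*} [MeasurableSpace Ω] (μ : Measure Ω)
    [IsProbabilityMeasure μ] (X Y : Ω → ℝ) (hX : Measurable X) (hY : Measurable Y)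
    (CX : ℝ) (hXb : ∀ ω, |X ω| ≤ CX) (CY : ℝ) (hYb : ∀ ω, |Y ω| ≤ CY)
    (α : ℝ) (hα : α ∈ Set.Ioo (0 : ℝ) 1) (lam : ℝ) (hlam : lam ∈ Set.Icc (0 : ℝ) 1) :
    EVaR μ (fun ω => lam * X ω + (1 - lam) * Y ω) α
      ≤ lam * EVaR μ X α + (1 - lam) * EVaR μ Y α := by
  rw [evar_eq_sInf μ X, evar_eq_sInf μ Y]
  refine le_convexComb_sInf (Set.image_nonempty.2 Set.nonempty_Ioi)
    (Set.image_nonempty.2 Set.nonempty_Ioi) hlam.1 hlam.2 ?_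
  rintro _ ⟨t₁, ht₁, rfl⟩ _ ⟨t₂, ht₂, rfl⟩
  exact evar_convexComb_le hX.aemeasurable hY.aemeasurable hXb hYb hα.1.le hα.2.le hlam.1 hlam.2
    ht₁ ht₂
end

section
/- If X ~ N(μ, σ²) is a real Gaussian random variable, then EVaR_α(X) = -μ + σ·√(-2 log α) for α ∈ (0,1), since log E[exp(-sX)] = -sμ + s²σ²/2 and the infimum over s > 0 of (-sμ + s²σ²/2 - log α)/s + μ is attained at s = √(-2 log α)/σ. -/
open MeasureTheory Real ProbabilityTheory
open scoped NNReal ENNReal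

lemma exp_mul_gaussianPDFReal (m t : ℝ) {v : ℝ≥0} (hv : v ≠ 0) (x : ℝ) :
    Real.exp (t * x) * gaussianPDFReal m v x
      = Real.exp (t * m + v * t ^ 2 / 2) * gaussianPDFReal (m + t * v) v x := by
  have hv' : (0 : ℝ) < v := lt_of_le_of_ne v.coe_nonneg (by exact_mod_cast hv.symm)
  simp only [gaussianPDFReal]
  rw [mul_left_comm, mul_left_comm (Real.exp _), ← Real.exp_add, ← Real.exp_add]
  congr 1
  field_simp
  ring

lemma integral_exp_gaussianReal (m : ℝ) {v : ℝ≥0} (hv : v ≠ 0) (t : ℝ) :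
    ∫ x, Real.exp (t * x) ∂(gaussianReal m v) = Real.exp (t * m + v * t ^ 2 / 2) := by
  rw [gaussianReal_of_var_ne_zero m hv]
  have hdens : (gaussianPDF m v) = fun x => ((Real.toNNReal (gaussianPDFReal m v x) : ℝ≥0) : ℝ≥0∞) := rfl
  rw [hdens, integral_withDensity_eq_integral_smul
    ((measurable_gaussianPDFReal m v).real_toNNReal) (fun x => Real.exp (t * x))]
  have : ∀ x : ℝ, (Real.toNNReal (gaussianPDFReal m v x) : ℝ≥0) • Real.exp (t * x)
      = Real.exp (t * m + v * t ^ 2 / 2) * gaussianPDFReal (m + t * v) v x := by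
    intro x
    rw [NNReal.smul_def, smul_eq_mul, Real.coe_toNNReal _ (gaussianPDFReal_nonneg m v x),
      mul_comm, exp_mul_gaussianPDFReal m t hv x]
  simp_rw [this]
  rw [integral_const_mul, integral_gaussianPDFReal_eq_one _ hv, mul_one]

theorem evar_gaussian {Ω : Type*} [MeasurableSpace Ω] (μ : Measure Ω)
    [IsProbabilityMeasure μ] (X : Ω → ℝ) (hX : Measurable X)
    (m σ : ℝ) (hσ : 0 < σ)
    (hXd : Measure.map X μ = gaussianReal m (Real.toNNReal (σ ^ 2)))
    (α : ℝ) (hα : α ∈ Set.Ioo (0 : ℝ) 1) :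
    EVaR μ X α = -m + σ * Real.sqrt (-2 * Real.log α) := by
  obtain ⟨hα0, hα1⟩ := hα
  have hc : 0 < -Real.log α := by
    have := Real.log_neg hα0 hα1; linarith
  set c : ℝ := -Real.log α with hcdef
  have hvne : Real.toNNReal (σ ^ 2) ≠ 0 := by
    simp [Real.toNNReal_eq_zero, not_le]
    positivity
  have hvcoe : ((Real.toNNReal (σ ^ 2) : ℝ≥0) : ℝ) = σ ^ 2 :=
    Real.coe_toNNReal _ (sq_nonneg σ)
  -- compute the integral
  have hint : ∀ s : ℝ, ∫ ω, Real.exp (-s * X ω) ∂μ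
      = Real.exp (-s * m + σ ^ 2 * s ^ 2 / 2) := by
    intro s
    have hmap : ∫ ω, Real.exp (-s * X ω) ∂μ
        = ∫ x, Real.exp (-s * x) ∂(Measure.map X μ) := by
      rw [integral_map hX.aemeasurable]
      exact (Real.continuous_exp.comp (continuous_const.mul continuous_id)).aestronglyMeasurable
    rw [hmap, hXd, integral_exp_gaussianReal m hvne (-s), hvcoe]
    ring_nf
  -- the function simplifies
  have hfun : ∀ s : ℝ, 0 < s →
      (Real.log (∫ ω, Real.exp (-s * X ω) ∂μ) - Real.log α) / s
        = -m + (σ ^ 2 * s / 2 + c / s) := by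
    intro s hs
    rw [hint s, Real.log_exp]
    field_simp
    ring
  have key : Real.sqrt (-2 * Real.log α) = Real.sqrt (2 * c) := by rw [hcdef]; ring_nf
  have hsq : Real.sqrt (2 * c) ^ 2 = 2 * c := Real.sq_sqrt (by linarith)
  have hsqpos : 0 < Real.sqrt (2 * c) := Real.sqrt_pos.mpr (by linarith)
  -- lower bound
  have hlb : ∀ y ∈ ((fun s : ℝ => (Real.log (∫ ω, Real.exp (-s * X ω) ∂μ) - Real.log α) / s)
      '' Set.Ioi 0), -m + σ * Real.sqrt (2 * c) ≤ y := by
    rintro y ⟨s, hs, rfl⟩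
    have hs' : 0 < s := hs
    dsimp only
    rw [hfun s hs]
    have h1 : σ * Real.sqrt (2 * c) ≤ σ ^ 2 * s / 2 + c / s := by
      rw [div_add_div _ _ (by norm_num : (2:ℝ) ≠ 0) (ne_of_gt hs), le_div_iff₀ (by positivity)]
      nlinarith [sq_nonneg (σ * s - Real.sqrt (2 * c)), hsq]
    linarith
  rw [EVaR, key]
  refine le_antisymm ?_ (le_csInf ?_ hlb)
  · apply csInf_le ⟨_, hlb⟩
    refine ⟨Real.sqrt (2 * c) / σ, Set.mem_Ioi.mpr (by positivity), ?_⟩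
    dsimp only
    rw [hfun _ (by positivity)]
    have h2 : σ ^ 2 * (Real.sqrt (2 * c) / σ) / 2 + c / (Real.sqrt (2 * c) / σ)
        = σ * Real.sqrt (2 * c) := by
      rw [div_div_eq_mul_div, div_add_div _ _ (by norm_num : (2:ℝ) ≠ 0)
        (by positivity : Real.sqrt (2 * c) ≠ 0)]
      rw [div_eq_iff (by positivity : (2 : ℝ) * Real.sqrt (2 * c) ≠ 0)]
      have hσs : σ ^ 2 * (Real.sqrt (2 * c) / σ) = σ * Real.sqrt (2 * c) := by
        field_simp
      nlinarith [hsq, hσs]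
    rw [h2]
  · exact ⟨_, ⟨1, Set.mem_Ioi.mpr one_pos, rfl⟩⟩
end

section
/- For a portfolio with weights ω ∈ ℝⁿ, ω_i ≥ 0, Σω_i = 1, and returns following Model 2, the portfolio return ⟨ω, R⟩ is a one-dimensional random variable with log E[exp(-s⟨ω, R⟩)] = -s⟨ω, μ̃⟩ + (s²/2) ω Q ωᵀ + λ(exp(-s⟨ω, μ⟩ + (s²/2) ω A ωᵀ) - 1) for all s > 0; consequently EVaR_α(⟨ω, R⟩) = inf_{s>0} [(-s⟨ω, μ̃⟩ + (s²/2) ω Q ωᵀ + λ(exp(-s⟨ω, μ⟩ + (s²/2) ω A ωᵀ) - 1) - log α)/s]. -/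
open MeasureTheory Real ProbabilityTheory Matrix

/-!
The integral in the EVaR is the moment generating function of `⟨w, R⟩` at `-s`. Independence
of `X` and the jump part makes it a product. The Gaussian factor is read off the Laplace
transform of `X` at `s • w`. For the jump part, conditioning on `M = m` and using independence
of the `W k` gives `E[e^{-s⟨w, S⟩}] = E[L^M]` with `L` the common Laplace transform of the
`⟨w, W k⟩`, and the Poisson generating function is `E[L^M] = exp (λ (L - 1))`.
-/

theorem integral_pow_poissonMeasure (r : NNReal) (t : ℝ) :
    ∫ m, t ^ m ∂(poissonMeasure r) = exp (r * (t - 1)) := by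
  rw [integral_poissonMeasure]
  have := ((NormedSpace.expSeries_div_hasSum_exp ((r : ℝ) * t)).mul_left (exp (-r))).tsum_eq
  rw [← exp_eq_exp_ℝ, ← exp_add] at this
  rw [mul_sub, mul_one, sub_eq_neg_add, ← this]
  congr with m
  rw [smul_eq_mul, mul_pow]
  ring

@[to_additive]
theorem measurable_prod_range_apply {β : Type*} [CommMonoid β] [MeasurableSpace β]
    [MeasurableMul₂ β] : Measurable fun p : ℕ × (ℕ → β) => ∏ k ∈ Finset.range p.1, p.2 k :=
  measurable_from_prod_countable_right fun m =>
    Finset.measurable_prod (Finset.range m) fun k _ => measurable_pi_apply k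

section

variable {Ω : Type*} [MeasurableSpace Ω] {μ : Measure Ω}

theorem mgf_dotProduct_of_integral_exp_neg_dotProduct {ι : Type*} [Fintype ι] {Y : Ω → ι → ℝ}
    {m : ι → ℝ} {C : Matrix ι ι ℝ}
    (h : ∀ u, ∫ ω, exp (-(u ⬝ᵥ Y ω)) ∂μ = exp (-(u ⬝ᵥ m) + 1 / 2 * (u ⬝ᵥ (C *ᵥ u))))
    (w : ι → ℝ) (t : ℝ) :
    mgf (fun ω => w ⬝ᵥ Y ω) μ t = exp (t * (w ⬝ᵥ m) + t ^ 2 / 2 * (w ⬝ᵥ (C *ᵥ w))) := by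
  calc mgf (fun ω => w ⬝ᵥ Y ω) μ t = ∫ ω, exp (-((-t • w) ⬝ᵥ Y ω)) ∂μ := by
        simp only [mgf, smul_dotProduct, smul_eq_mul, neg_mul, neg_neg]
    _ = _ := by
        rw [h]
        simp only [smul_dotProduct, mulVec_smul, dotProduct_smul, smul_eq_mul]
        ring_nf

variable [IsProbabilityMeasure μ]

theorem lintegral_prod_range_eq_lintegral_pow {N : Ω → ℕ} {Y : ℕ → Ω → ENNReal} {c : ENNReal}
    (hN : Measurable N) (hY : ∀ k, Measurable (Y k)) (hY_indep : iIndepFun Y μ)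
    (hNY : IndepFun N (fun ω k => Y k ω) μ) (hc : ∀ k, ∫⁻ ω, Y k ω ∂μ = c) :
    ∫⁻ ω, ∏ k ∈ Finset.range (N ω), Y k ω ∂μ = ∫⁻ m, c ^ m ∂(μ.map N) := by
  set V : Ω → ℕ → ENNReal := fun ω k => Y k ω
  have hV : Measurable V := measurable_pi_lambda _ hY
  set F : ℕ × (ℕ → ENNReal) → ENNReal := fun p => ∏ k ∈ Finset.range p.1, p.2 k
  have hF : Measurable F := measurable_prod_range_apply
  have hmap : μ.map (fun ω => (N ω, V ω)) = (μ.map N).prod (μ.map V) :=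
    (indepFun_iff_map_prod_eq_prod_map_map hN.aemeasurable hV.aemeasurable).mp hNY
  calc ∫⁻ ω, ∏ k ∈ Finset.range (N ω), Y k ω ∂μ
      = ∫⁻ p, F p ∂(μ.map fun ω => (N ω, V ω)) := (lintegral_map hF (hN.prodMk hV)).symm
    _ = ∫⁻ m, ∫⁻ v, F (m, v) ∂(μ.map V) ∂(μ.map N) := by
        rw [hmap, lintegral_prod _ hF.aemeasurable]
    _ = ∫⁻ m, c ^ m ∂(μ.map N) := by
        congr with m
        dsimp only [F]
        rw [lintegral_map (Finset.measurable_prod _ fun k _ => measurable_pi_apply k) hV,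
          lintegral_prod_eq_prod_lintegral_of_indepFun _ _ hY_indep hY]
        simp [hc]

theorem integral_prod_range_eq_integral_pow {N : Ω → ℕ} {Y : ℕ → Ω → ℝ} {c : ℝ}
    (hN : Measurable N) (hY : ∀ k, Measurable (Y k)) (hY_nonneg : ∀ k ω, 0 ≤ Y k ω)
    (hY_int : ∀ k, Integrable (Y k) μ) (hY_indep : iIndepFun Y μ)
    (hNY : IndepFun N (fun ω k => Y k ω) μ) (hc : ∀ k, ∫ ω, Y k ω ∂μ = c) :
    ∫ ω, ∏ k ∈ Finset.range (N ω), Y k ω ∂μ = ∫ m, c ^ m ∂(μ.map N) := by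
  have hc_nonneg : 0 ≤ c := hc 0 ▸ integral_nonneg (hY_nonneg 0)
  have hlin : ∀ k, ∫⁻ ω, ENNReal.ofReal (Y k ω) ∂μ = ENNReal.ofReal c := fun k => by
    rw [← hc k, ofReal_integral_eq_lintegral_ofReal (hY_int k) (.of_forall (hY_nonneg k))]
  have hprod := lintegral_prod_range_eq_lintegral_pow hN
    (fun k => (hY k).ennreal_ofReal) (hY_indep.comp _ fun _ => ENNReal.measurable_ofReal)
    (hNY.comp measurable_id (measurable_pi_lambda _ fun k =>
      ENNReal.measurable_ofReal.comp (measurable_pi_apply k))) hlin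
  have hmeas : Measurable fun ω => ∏ k ∈ Finset.range (N ω), Y k ω :=
    measurable_prod_range_apply.comp (hN.prodMk (measurable_pi_lambda _ hY))
  rw [integral_eq_lintegral_of_nonneg_ae
      (.of_forall fun ω => Finset.prod_nonneg fun k _ => hY_nonneg k ω)
      hmeas.aestronglyMeasurable,
    integral_eq_lintegral_of_nonneg_ae (.of_forall fun m => by positivity) (by fun_prop)]
  congr 1
  simp_rw [ENNReal.ofReal_prod_of_nonneg fun k _ => hY_nonneg k _, ENNReal.ofReal_pow hc_nonneg]
  exact hprod

theorem mgf_sum_range_of_map_eq_poissonMeasure {N : Ω → ℕ} {Z : ℕ → Ω → ℝ} {r : NNReal}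
    {t L : ℝ}
    (hN : Measurable N) (hN_law : μ.map N = poissonMeasure r) (hZ : ∀ k, Measurable (Z k))
    (hZ_int : ∀ k, Integrable (fun ω => exp (t * Z k ω)) μ) (hZ_indep : iIndepFun Z μ)
    (hNZ : IndepFun N (fun ω k => Z k ω) μ) (hL : ∀ k, mgf (Z k) μ t = L) :
    mgf (fun ω => ∑ k ∈ Finset.range (N ω), Z k ω) μ t = exp (r * (L - 1)) := by
  have hY_indep : iIndepFun (fun k ω => exp (t * Z k ω)) μ :=
    hZ_indep.comp (fun _ x => exp (t * x)) fun _ => by fun_prop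
  have hNY : IndepFun N (fun ω k => exp (t * Z k ω)) μ :=
    hNZ.comp (φ := id) (ψ := fun (v : ℕ → ℝ) k => exp (t * v k)) measurable_id (by fun_prop)
  calc mgf (fun ω => ∑ k ∈ Finset.range (N ω), Z k ω) μ t
      = ∫ ω, ∏ k ∈ Finset.range (N ω), exp (t * Z k ω) ∂μ := by
        simp only [mgf, Finset.mul_sum, exp_sum]
    _ = ∫ m, L ^ m ∂(μ.map N) :=
        integral_prod_range_eq_integral_pow hN (fun k => by fun_prop)
          (fun _ _ => (exp_pos _).le) hZ_int hY_indep hNY hL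
    _ = exp (r * (L - 1)) := by rw [hN_law, integral_pow_poissonMeasure]

end

theorem model2_portfolio_evar_general {Ω : Type*} [MeasurableSpace Ω]
    (μ : Measure Ω) [IsProbabilityMeasure μ] {n : ℕ}
    (μt μv : Fin n → ℝ) (Q A : Matrix (Fin n) (Fin n) ℝ) (lam : NNReal)
    (X : Ω → (Fin n → ℝ)) (hXm : Measurable X)
    (hXlaplace : ∀ u : Fin n → ℝ,
      ∫ ω, Real.exp (-(u ⬝ᵥ X ω)) ∂μ
        = Real.exp (-(u ⬝ᵥ μt) + (1 / 2) * (u ⬝ᵥ (Q *ᵥ u))))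
    (W : ℕ → Ω → (Fin n → ℝ)) (hWm : ∀ k, Measurable (W k))
    (hWlaplace : ∀ k (u : Fin n → ℝ),
      ∫ ω, Real.exp (-(u ⬝ᵥ W k ω)) ∂μ
        = Real.exp (-(u ⬝ᵥ μv) + (1 / 2) * (u ⬝ᵥ (A *ᵥ u))))
    (hWindep : iIndepFun W μ)
    (M : Ω → ℕ) (hMm : Measurable M)
    (hMd : Measure.map M μ = poissonMeasure lam)
    (hMW : IndepFun M (fun ω => fun k => W k ω) μ)
    (hXindep : IndepFun X (fun ω => ∑ k ∈ Finset.range (M ω), W k ω) μ)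
    (R : Ω → (Fin n → ℝ))
    (hR : ∀ ω, R ω = X ω + ∑ k ∈ Finset.range (M ω), W k ω)
    (w : Fin n → ℝ)
    (α : ℝ) :
    (∀ s : ℝ, 0 < s →
      Real.log (∫ ω, Real.exp (-s * (w ⬝ᵥ R ω)) ∂μ)
        = -s * (w ⬝ᵥ μt) + (s ^ 2 / 2) * (w ⬝ᵥ (Q *ᵥ w))
          + lam * (Real.exp (-s * (w ⬝ᵥ μv) + (s ^ 2 / 2) * (w ⬝ᵥ (A *ᵥ w))) - 1)) ∧
    EVaR μ (fun ω => w ⬝ᵥ R ω) α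
      = sInf ((fun s : ℝ =>
          (-s * (w ⬝ᵥ μt) + (s ^ 2 / 2) * (w ⬝ᵥ (Q *ᵥ w))
            + lam * (Real.exp (-s * (w ⬝ᵥ μv) + (s ^ 2 / 2) * (w ⬝ᵥ (A *ᵥ w))) - 1)
            - Real.log α) / s) '' Set.Ioi 0) := by
  have hdot : Measurable fun v : Fin n → ℝ => w ⬝ᵥ v := by fun_prop
  have hR_split : (fun ω => w ⬝ᵥ R ω)
      = (fun ω => w ⬝ᵥ X ω) + fun ω => w ⬝ᵥ ∑ k ∈ Finset.range (M ω), W k ω := by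
    ext ω; simp only [hR, dotProduct_add, Pi.add_apply]
  have hlog : ∀ s : ℝ, Real.log (∫ ω, Real.exp (-s * (w ⬝ᵥ R ω)) ∂μ)
      = -s * (w ⬝ᵥ μt) + (s ^ 2 / 2) * (w ⬝ᵥ (Q *ᵥ w))
        + lam * (Real.exp (-s * (w ⬝ᵥ μv) + (s ^ 2 / 2) * (w ⬝ᵥ (A *ᵥ w))) - 1) := by
    intro s
    have hWmgf : ∀ k, mgf (fun ω => w ⬝ᵥ W k ω) μ (-s)
        = exp (-s * (w ⬝ᵥ μv) + s ^ 2 / 2 * (w ⬝ᵥ (A *ᵥ w))) := fun k => by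
      rw [mgf_dotProduct_of_integral_exp_neg_dotProduct (hWlaplace k), neg_sq]
    have hjumps : mgf (fun ω => w ⬝ᵥ ∑ k ∈ Finset.range (M ω), W k ω) μ (-s)
        = exp (lam * (exp (-s * (w ⬝ᵥ μv) + s ^ 2 / 2 * (w ⬝ᵥ (A *ᵥ w))) - 1)) := by
      simp only [dotProduct_sum]
      exact mgf_sum_range_of_map_eq_poissonMeasure hMm hMd (fun k => hdot.comp (hWm k))
        (fun k => mgf_pos_iff.mp (hWmgf k ▸ exp_pos _))
        (hWindep.comp (fun _ => (w ⬝ᵥ ·)) fun _ => hdot)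
        (hMW.comp (ψ := fun (v : ℕ → Fin n → ℝ) k => w ⬝ᵥ v k) measurable_id (by fun_prop))
        hWmgf
    have hS : Measurable fun ω => ∑ k ∈ Finset.range (M ω), W k ω :=
      measurable_sum_range_apply.comp (hMm.prodMk (measurable_pi_lambda _ hWm))
    have hindep : IndepFun (fun ω => w ⬝ᵥ X ω)
        (fun ω => w ⬝ᵥ ∑ k ∈ Finset.range (M ω), W k ω) μ := hXindep.comp hdot hdot
    change Real.log (mgf (fun ω => w ⬝ᵥ R ω) μ (-s)) = _
    rw [hR_split, hindep.mgf_add' (hdot.comp hXm).aestronglyMeasurable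
        (hdot.comp hS).aestronglyMeasurable,
      mgf_dotProduct_of_integral_exp_neg_dotProduct hXlaplace, hjumps, neg_sq,
      log_mul (exp_ne_zero _) (exp_ne_zero _), log_exp, log_exp]
  refine ⟨fun s _ => hlog s, ?_⟩
  rw [EVaR]
  congr 1
  exact Set.image_congr fun s _ => by rw [hlog s]

theorem model2_portfolio_evar {Ω : Type*} [MeasurableSpace Ω]
    (μ : Measure Ω) [IsProbabilityMeasure μ] {n : ℕ}
    (μt μv : Fin n → ℝ) (Q A : Matrix (Fin n) (Fin n) ℝ) (lam : NNReal)
    (X : Ω → (Fin n → ℝ)) (hXm : Measurable X)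
    (hXlaplace : ∀ u : Fin n → ℝ,
      ∫ ω, Real.exp (-(u ⬝ᵥ X ω)) ∂μ
        = Real.exp (-(u ⬝ᵥ μt) + (1 / 2) * (u ⬝ᵥ (Q *ᵥ u))))
    (W : ℕ → Ω → (Fin n → ℝ)) (hWm : ∀ k, Measurable (W k))
    (hWlaplace : ∀ k (u : Fin n → ℝ),
      ∫ ω, Real.exp (-(u ⬝ᵥ W k ω)) ∂μ
        = Real.exp (-(u ⬝ᵥ μv) + (1 / 2) * (u ⬝ᵥ (A *ᵥ u))))
    (hWindep : iIndepFun W μ)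
    (M : Ω → ℕ) (hMm : Measurable M)
    (hMd : Measure.map M μ = poissonMeasure lam)
    (hMW : IndepFun M (fun ω => fun k => W k ω) μ)
    (hXindep : IndepFun X (fun ω => ∑ k ∈ Finset.range (M ω), W k ω) μ)
    (R : Ω → (Fin n → ℝ))
    (hR : ∀ ω, R ω = X ω + ∑ k ∈ Finset.range (M ω), W k ω)
    (w : Fin n → ℝ) (hw0 : ∀ i, 0 ≤ w i) (hw1 : ∑ i, w i = 1)
    (α : ℝ) (hα : α ∈ Set.Ioo (0 : ℝ) 1) :
    (∀ s : ℝ, 0 < s →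
      Real.log (∫ ω, Real.exp (-s * (w ⬝ᵥ R ω)) ∂μ)
        = -s * (w ⬝ᵥ μt) + (s ^ 2 / 2) * (w ⬝ᵥ (Q *ᵥ w))
          + lam * (Real.exp (-s * (w ⬝ᵥ μv) + (s ^ 2 / 2) * (w ⬝ᵥ (A *ᵥ w))) - 1)) ∧
    EVaR μ (fun ω => w ⬝ᵥ R ω) α
      = sInf ((fun s : ℝ =>
          (-s * (w ⬝ᵥ μt) + (s ^ 2 / 2) * (w ⬝ᵥ (Q *ᵥ w))
            + lam * (Real.exp (-s * (w ⬝ᵥ μv) + (s ^ 2 / 2) * (w ⬝ᵥ (A *ᵥ w))) - 1)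
            - Real.log α) / s) '' Set.Ioi 0) :=
  model2_portfolio_evar_general μ μt μv Q A lam X hXm hXlaplace W hWm hWlaplace hWindep M hMm hMd
    hMW hXindep R hR w α
end
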